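/- Let M,L>0 and κ>0 with κ·M ≤ π², and let W:ℝ³→ℝ satisfy |W(k)| ≤ M and |W(k)−W(0)| ≤ L·|k| for all k ∈ ℝ³. Define, for p ∈ 2πℤ³∖{0} and v ∈ ℝ, e_p(v) = −|p|² − κ·v + √(|p|⁴+2|p|²·κ·v) + κ²·v²/(2|p|²). Then for every 0<β≤1 and every 0<α<β there exists C>0 such that for all N≥1 both families (e_p(W(p/N^β)))_{p∈Λ*₊} and (e_p(W(0)))_{p∈Λ*₊} are absolutely summable and | ∑_{p∈Λ*₊} e_p(W(p/N^β)) − ∑_{p∈Λ*₊} e_p(W(0)) | ≤ C·N^{−α}. -/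

import Mathlib

open MeasureTheory Real

noncomputable section

/-- `ℝ³` as a Euclidean space. -/
abbrev E3 : Type := EuclideanSpace ℝ (Fin 3)

/-- The point `2πn` of the lattice `Λ* = 2πℤ³ ⊂ ℝ³`. -/
def latticePt (n : Fin 3 → ℤ) : E3 := WithLp.toLp 2 (fun i => 2 * π * (n i : ℝ))

/-- Index type for the punctured lattice `Λ*₊ = 2πℤ³ \ {0}`. -/
abbrev NZ : Type := {n : Fin 3 → ℤ // n ≠ 0}

/-- `e_p(v) = −|p|² − κv + √(|p|⁴+2|p|²κv) + κ²v²/(2|p|²)`. -/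
def bogE (κ : ℝ) (p : E3) (v : ℝ) : ℝ :=
  -‖p‖ ^ 2 - κ * v + Real.sqrt (‖p‖ ^ 4 + 2 * ‖p‖ ^ 2 * κ * v)
    + κ ^ 2 * v ^ 2 / (2 * ‖p‖ ^ 2)

/-!
Put `A = |p|²`, `u = κv` and `d = √(A² + 2Au) − A`. Then `u = d + d²/(2A)` and the Bogoliubov
term `e_p(v)` equals `d³/(2A²) + d⁴/(8A³)`: it vanishes to third order in `d`. Since
`|u| ≤ κM ≤ A/4`, `d` is a `2`-Lipschitz function of `u` with `|d| ≤ 2κM`, so `e_p` is Lipschitz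
in `v` with constant `O(|p|⁻⁴)`.

With `θ = α/β ∈ (0, 1)`, boundedness and the Lipschitz bound at `0` give
`|W(p/N^β) − W(0)| ≤ min(L|p|N^{-β}, 2M) ≤ (L|p|N^{-β})^θ (2M)^{1-θ}`, so the two sums differ by
at most `N^{-α}` times a multiple of `∑ |p|^{θ-4}`, which converges on the lattice since
`4 − θ > 3`.
-/

lemma abs_sqrt_sub_sqrt_le {x y c : ℝ} (hc : 0 < c) (hx : c ^ 2 ≤ x) (hy : c ^ 2 ≤ y) :
    |√x - √y| ≤ |x - y| / (2 * c) := by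
  have hcx : c ≤ √x := Real.le_sqrt_of_sq_le hx
  have hcy : c ≤ √y := Real.le_sqrt_of_sq_le hy
  have hxy : (√x - √y) * (√x + √y) = x - y := by
    rw [show (√x - √y) * (√x + √y) = √x ^ 2 - √y ^ 2 by ring,
      Real.sq_sqrt ((sq_nonneg c).trans hx), Real.sq_sqrt ((sq_nonneg c).trans hy)]
  rw [le_div_iff₀ (by positivity), ← hxy, abs_mul, abs_of_pos (by linarith : 0 < √x + √y)]
  gcongr
  linarith

lemma abs_cubic_quartic_sub_le {A r d₁ d₂ : ℝ} (hA : 0 < A) (hr : r ≤ A)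
    (hd₁ : |d₁| ≤ r) (hd₂ : |d₂| ≤ r) :
    |(d₁ ^ 3 / (2 * A ^ 2) + d₁ ^ 4 / (8 * A ^ 3)) - (d₂ ^ 3 / (2 * A ^ 2) + d₂ ^ 4 / (8 * A ^ 3))|
      ≤ 2 * r ^ 2 / A ^ 2 * |d₁ - d₂| := by
  have hr0 : 0 ≤ r := (abs_nonneg _).trans hd₁
  have hfactor : (d₁ ^ 3 / (2 * A ^ 2) + d₁ ^ 4 / (8 * A ^ 3))
      - (d₂ ^ 3 / (2 * A ^ 2) + d₂ ^ 4 / (8 * A ^ 3))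
      = (d₁ - d₂) * ((d₁ ^ 2 + d₁ * d₂ + d₂ ^ 2) / (2 * A ^ 2)
          + (d₁ + d₂) * (d₁ ^ 2 + d₂ ^ 2) / (8 * A ^ 3)) := by
    field_simp
    ring
  have hquad : |d₁ ^ 2 + d₁ * d₂ + d₂ ^ 2| ≤ 3 * r ^ 2 :=
    calc _ ≤ |d₁| ^ 2 + |d₁| * |d₂| + |d₂| ^ 2 := by
          rw [← abs_mul, ← abs_pow, ← abs_pow]
          exact abs_add_three _ _ _
      _ ≤ r ^ 2 + r * r + r ^ 2 := by gcongr
      _ = 3 * r ^ 2 := by ring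
  have hcub : |(d₁ + d₂) * (d₁ ^ 2 + d₂ ^ 2)| ≤ 4 * r ^ 2 * A :=
    calc _ ≤ (|d₁| + |d₂|) * (|d₁| ^ 2 + |d₂| ^ 2) := by
          rw [abs_mul]
          gcongr
          · exact abs_add_le _ _
          · rw [← abs_pow, ← abs_pow]
            exact abs_add_le _ _
      _ ≤ (r + r) * (r ^ 2 + r ^ 2) := by gcongr
      _ ≤ 4 * r ^ 2 * A := by nlinarith
  rw [hfactor, abs_mul, mul_comm]
  gcongr
  calc _ ≤ _ := abs_add_le _ _
    _ = |d₁ ^ 2 + d₁ * d₂ + d₂ ^ 2| / (2 * A ^ 2)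
        + |(d₁ + d₂) * (d₁ ^ 2 + d₂ ^ 2)| / (8 * A ^ 3) := by
        rw [abs_div, abs_div, abs_of_pos (by positivity : (0 : ℝ) < 2 * A ^ 2),
          abs_of_pos (by positivity : (0 : ℝ) < 8 * A ^ 3)]
    _ ≤ 3 * r ^ 2 / (2 * A ^ 2) + 4 * r ^ 2 * A / (8 * A ^ 3) := by gcongr
    _ = 2 * r ^ 2 / A ^ 2 := by field_simp; ring

lemma le_rpow_mul_rpow_of_le {x a b θ : ℝ} (hx : 0 ≤ x) (ha : x ≤ a) (hb : x ≤ b)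
    (hθ0 : 0 ≤ θ) (hθ1 : θ ≤ 1) : x ≤ a ^ θ * b ^ (1 - θ) :=
  calc x = x ^ θ * x ^ (1 - θ) := by rw [← Real.rpow_add' hx (by norm_num)]; norm_num
    _ ≤ a ^ θ * b ^ (1 - θ) :=
      mul_le_mul (Real.rpow_le_rpow hx ha hθ0) (Real.rpow_le_rpow hx hb (by linarith))
        (by positivity) (Real.rpow_nonneg (hx.trans ha) _)

lemma abs_tsum_sub_tsum_le {ι : Type*} {f g h : ι → ℝ} (hf : Summable f) (hg : Summable g)
    (hh : Summable h) (hfg : ∀ i, |f i - g i| ≤ h i) :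
    |∑' i, f i - ∑' i, g i| ≤ ∑' i, h i := by
  rw [← hf.tsum_sub hg]
  exact tsum_of_norm_bounded hh.hasSum fun i => (Real.norm_eq_abs _).trans_le (hfg i)

def bogProfile (A u : ℝ) : ℝ := -A - u + √(A ^ 2 + 2 * A * u) + u ^ 2 / (2 * A)

lemma bogProfile_zero {A : ℝ} (hA : 0 ≤ A) : bogProfile A 0 = 0 := by
  simp [bogProfile, Real.sqrt_sq hA]

lemma bogProfile_eq_of_sqrt_sub {A u : ℝ} (hA : 0 < A) (hu : 0 ≤ A ^ 2 + 2 * A * u) :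
    bogProfile A u = (√(A ^ 2 + 2 * A * u) - A) ^ 3 / (2 * A ^ 2)
      + (√(A ^ 2 + 2 * A * u) - A) ^ 4 / (8 * A ^ 3) := by
  have hsq := Real.sq_sqrt hu
  unfold bogProfile
  generalize √(A ^ 2 + 2 * A * u) = S at hsq ⊢
  obtain rfl : u = (S ^ 2 - A ^ 2) / (2 * A) := by field_simp; linarith
  field_simp
  ring

lemma abs_bogProfile_sub_le {A m u₁ u₂ : ℝ} (hA : 0 < A) (hm : 4 * m ≤ A)
    (hu₁ : |u₁| ≤ m) (hu₂ : |u₂| ≤ m) :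
    |bogProfile A u₁ - bogProfile A u₂| ≤ 16 * m ^ 2 / A ^ 2 * |u₁ - u₂| := by
  have hsq : ∀ u, |u| ≤ m → (A / 2) ^ 2 ≤ A ^ 2 + 2 * A * u := fun u hu => by
    nlinarith [neg_abs_le u]
  have hsqrt : ∀ u₁ u₂, |u₁| ≤ m → |u₂| ≤ m →
      |√(A ^ 2 + 2 * A * u₁) - √(A ^ 2 + 2 * A * u₂)| ≤ 2 * |u₁ - u₂| := fun u₁ u₂ h₁ h₂ => by
    refine (abs_sqrt_sub_sqrt_le (by positivity) (hsq u₁ h₁) (hsq u₂ h₂)).trans_eq ?_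
    rw [show A ^ 2 + 2 * A * u₁ - (A ^ 2 + 2 * A * u₂) = 2 * A * (u₁ - u₂) by ring, abs_mul,
      abs_of_pos (by positivity)]
    field_simp
  have hd : ∀ u, |u| ≤ m → |√(A ^ 2 + 2 * A * u) - A| ≤ 2 * m := fun u hu => by
    have h := hsqrt u 0 hu (abs_zero.trans_le ((abs_nonneg u).trans hu))
    rw [mul_zero, add_zero, Real.sqrt_sq hA.le, sub_zero] at h
    linarith
  rw [bogProfile_eq_of_sqrt_sub hA ((sq_nonneg _).trans (hsq u₁ hu₁)),
    bogProfile_eq_of_sqrt_sub hA ((sq_nonneg _).trans (hsq u₂ hu₂))]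
  calc _ ≤ 2 * (2 * m) ^ 2 / A ^ 2
        * |(√(A ^ 2 + 2 * A * u₁) - A) - (√(A ^ 2 + 2 * A * u₂) - A)| :=
        abs_cubic_quartic_sub_le hA (by linarith) (hd u₁ hu₁) (hd u₂ hu₂)
    _ ≤ 2 * (2 * m) ^ 2 / A ^ 2 * (2 * |u₁ - u₂|) := by
        rw [sub_sub_sub_cancel_right]
        gcongr
        exact hsqrt u₁ u₂ hu₁ hu₂
    _ = 16 * m ^ 2 / A ^ 2 * |u₁ - u₂| := by ring

lemma two_pi_le_norm_latticePt {n : Fin 3 → ℤ} (hn : n ≠ 0) : 2 * π ≤ ‖latticePt n‖ := by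
  obtain ⟨i, hi⟩ := Function.ne_iff.mp hn
  have hni : (1 : ℝ) ≤ |(n i : ℝ)| := by exact_mod_cast Int.one_le_abs hi
  calc 2 * π ≤ 2 * π * |(n i : ℝ)| := le_mul_of_one_le_right (by positivity) hni
    _ = ‖latticePt n i‖ := by simp [latticePt, abs_of_pos pi_pos]
    _ ≤ ‖latticePt n‖ := PiLp.norm_apply_le _ i

def latticeBasis : Module.Basis (Fin 3) ℝ E3 :=
  (EuclideanSpace.basisFun (Fin 3) ℝ).toBasis.isUnitSMul (w := fun _ => 2 * π)
    fun _ => (by positivity : (2 * π : ℝ) ≠ 0).isUnit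

lemma latticePt_eq_sum (n : Fin 3 → ℤ) : latticePt n = ∑ i, (n i : ℝ) • latticeBasis i := by
  ext j
  simp [latticePt, latticeBasis, Module.Basis.isUnitSMul_apply, Pi.single_apply, mul_comm]

lemma summable_norm_latticePt_rpow {r : ℝ} (hr : r < -3) :
    Summable fun n : NZ => ‖latticePt n.1‖ ^ r := by
  set L := Submodule.span ℤ (Set.range latticeBasis)
  have hrank : Module.finrank ℤ L = 3 := by
    rw [ZLattice.rank ℝ L, finrank_euclideanSpace_fin]
  have hL : Summable fun z : L => ‖z‖ ^ r :=
    ZLattice.summable_norm_rpow L r (by simpa [hrank] using hr)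
  have hcoord := ((latticeBasis.restrictScalars ℤ).equivFun.symm.summable_iff).mpr hL
  have hZ : Summable fun n : Fin 3 → ℤ => ‖latticePt n‖ ^ r := hcoord.congr fun n => by
    simp [Module.Basis.equivFun_symm_apply, latticePt_eq_sum, Int.cast_smul_eq_zsmul]
  exact hZ.subtype {n | n ≠ 0}

lemma bogE_eq_bogProfile (κ : ℝ) (p : E3) (v : ℝ) :
    bogE κ p v = bogProfile (‖p‖ ^ 2) (κ * v) := by
  simp only [bogE, bogProfile]
  ring_nf

lemma abs_bogE_sub_le {κ M : ℝ} (hκ : 0 < κ) (hκM : κ * M ≤ π ^ 2) {p : E3}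
    (hp : 2 * π ≤ ‖p‖) {v₁ v₂ : ℝ} (hv₁ : |v₁| ≤ M) (hv₂ : |v₂| ≤ M) :
    |bogE κ p v₁ - bogE κ p v₂| ≤ 16 * κ ^ 3 * M ^ 2 * ‖p‖ ^ (-4 : ℝ) * |v₁ - v₂| := by
  have hp0 : 0 < ‖p‖ := lt_of_lt_of_le (by positivity) hp
  have hκv : ∀ v, |v| ≤ M → |κ * v| ≤ κ * M := fun v hv => by
    rw [abs_mul, abs_of_pos hκ]
    exact mul_le_mul_of_nonneg_left hv hκ.le
  rw [bogE_eq_bogProfile, bogE_eq_bogProfile]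
  refine (abs_bogProfile_sub_le (by positivity) (by nlinarith [pi_pos]) (hκv v₁ hv₁)
    (hκv v₂ hv₂)).trans_eq ?_
  rw [← mul_sub, abs_mul, abs_of_pos hκ, Real.rpow_neg hp0.le,
    show (4 : ℝ) = (4 : ℕ) by norm_num, Real.rpow_natCast]
  ring

lemma abs_bogE_le {κ M : ℝ} (hκ : 0 < κ) (hκM : κ * M ≤ π ^ 2) {p : E3}
    (hp : 2 * π ≤ ‖p‖) {v : ℝ} (hv : |v| ≤ M) :
    |bogE κ p v| ≤ 16 * κ ^ 3 * M ^ 3 * ‖p‖ ^ (-4 : ℝ) := by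
  have hM : 0 ≤ M := (abs_nonneg v).trans hv
  have h := abs_bogE_sub_le hκ hκM hp hv (by rwa [abs_zero] : |(0 : ℝ)| ≤ M)
  rw [bogE_eq_bogProfile κ p 0, mul_zero, bogProfile_zero (by positivity), sub_zero,
    sub_zero] at h
  calc _ ≤ _ := h
    _ ≤ 16 * κ ^ 3 * M ^ 2 * ‖p‖ ^ (-4 : ℝ) * M := by gcongr
    _ = _ := by ring

lemma summable_bogE_latticePt {κ M : ℝ} (hκ : 0 < κ) (hκM : κ * M ≤ π ^ 2) {v : NZ → ℝ}
    (hv : ∀ n, |v n| ≤ M) : Summable fun n : NZ => bogE κ (latticePt n.1) (v n) :=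
  .of_norm_bounded ((summable_norm_latticePt_rpow (by norm_num)).mul_left _)
    fun n => abs_bogE_le hκ hκM (two_pi_le_norm_latticePt n.2) (hv n)

lemma abs_bogE_smul_sub_le {κ M L θ t : ℝ} (hκ : 0 < κ) (hκM : κ * M ≤ π ^ 2) (hL : 0 ≤ L)
    (hθ0 : 0 ≤ θ) (hθ1 : θ ≤ 1) (ht : 0 ≤ t) {W : E3 → ℝ} (hWb : ∀ k, |W k| ≤ M)
    (hWL : ∀ k, |W k - W 0| ≤ L * ‖k‖) {p : E3} (hp : 2 * π ≤ ‖p‖) :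
    |bogE κ p (W (t • p)) - bogE κ p (W 0)|
      ≤ 16 * κ ^ 3 * M ^ 2 * (L ^ θ * (2 * M) ^ (1 - θ)) * ‖p‖ ^ (θ - 4) * t ^ θ := by
  have hp0 : 0 < ‖p‖ := lt_of_lt_of_le (by positivity) hp
  have hM : 0 ≤ M := (abs_nonneg _).trans (hWb 0)
  have hW : |W (t • p) - W 0| ≤ (L * ‖t • p‖) ^ θ * (2 * M) ^ (1 - θ) :=
    le_rpow_mul_rpow_of_le (abs_nonneg _) (hWL _)
      ((abs_sub _ _).trans (by linarith [hWb (t • p), hWb 0])) hθ0 hθ1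
  calc _ ≤ 16 * κ ^ 3 * M ^ 2 * ‖p‖ ^ (-4 : ℝ) * |W (t • p) - W 0| :=
        abs_bogE_sub_le hκ hκM hp (hWb _) (hWb _)
    _ ≤ 16 * κ ^ 3 * M ^ 2 * ‖p‖ ^ (-4 : ℝ) * ((L * ‖t • p‖) ^ θ * (2 * M) ^ (1 - θ)) := by
        gcongr
    _ = _ := by
        rw [norm_smul, Real.norm_of_nonneg ht, Real.mul_rpow hL (by positivity),
          Real.mul_rpow ht hp0.le, sub_eq_add_neg θ, Real.rpow_add hp0]
        ring

theorem statement_13_general (M L κ : ℝ) (hM : 0 < M) (hL : 0 < L) (hκ : 0 < κ)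
    (hκM : κ * M ≤ π ^ 2) (W : E3 → ℝ)
    (hWb : ∀ k : E3, |W k| ≤ M) (hWL : ∀ k : E3, |W k - W 0| ≤ L * ‖k‖)
    (β : ℝ) (hβ0 : 0 < β) (α : ℝ) (hα0 : 0 < α) (hαβ : α < β) :
    ∃ C > 0, ∀ N : ℕ, 1 ≤ N →
      Summable (fun n : NZ =>
        bogE κ (latticePt n.1) (W (((N : ℝ) ^ β)⁻¹ • latticePt n.1))) ∧
      Summable (fun n : NZ => bogE κ (latticePt n.1) (W 0)) ∧
      |(∑' n : NZ, bogE κ (latticePt n.1) (W (((N : ℝ) ^ β)⁻¹ • latticePt n.1)))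
          - ∑' n : NZ, bogE κ (latticePt n.1) (W 0)|
        ≤ C * (N : ℝ) ^ (-α) := by
  set θ := α / β
  have hθ0 : 0 < θ := div_pos hα0 hβ0
  have hθ1 : θ < 1 := (div_lt_one hβ0).mpr hαβ
  set K := 16 * κ ^ 3 * M ^ 2 * (L ^ θ * (2 * M) ^ (1 - θ))
  have hT : Summable fun n : NZ => ‖latticePt n.1‖ ^ (θ - 4) :=
    summable_norm_latticePt_rpow (by linarith)
  refine ⟨K * ∑' n : NZ, ‖latticePt n.1‖ ^ (θ - 4) + 1, by positivity, fun N hN => ?_⟩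
  have hN0 : (0 : ℝ) < N := by exact_mod_cast hN
  have hscale : (((N : ℝ) ^ β)⁻¹) ^ θ = (N : ℝ) ^ (-α) := by
    rw [Real.inv_rpow (by positivity), ← Real.rpow_mul hN0.le, mul_div_cancel₀ _ hβ0.ne',
      Real.rpow_neg hN0.le]
  have hs₁ := summable_bogE_latticePt hκ hκM fun n => hWb (((N : ℝ) ^ β)⁻¹ • latticePt n.1)
  have hs₂ := summable_bogE_latticePt (v := fun _ => W 0) hκ hκM fun _ => hWb 0
  refine ⟨hs₁, hs₂, ?_⟩
  calc _ ≤ ∑' n : NZ, K * ‖latticePt n.1‖ ^ (θ - 4) * (N : ℝ) ^ (-α) :=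
        abs_tsum_sub_tsum_le hs₁ hs₂ ((hT.mul_left K).mul_right _) fun n => hscale ▸
          abs_bogE_smul_sub_le hκ hκM hL.le hθ0.le hθ1.le (by positivity) hWb hWL
            (two_pi_le_norm_latticePt n.2)
    _ = K * (∑' n : NZ, ‖latticePt n.1‖ ^ (θ - 4)) * (N : ℝ) ^ (-α) := by
        rw [tsum_mul_right, tsum_mul_left]
    _ ≤ _ := by gcongr; linarith

/-- for bounded Lipschitz-at-`0` `W` with `κM ≤ π²`, and `0 < β ≤ 1`,
`0 < α < β`, there is `C > 0` such that for all `N ≥ 1` the families `(e_p(W(p/N^β)))_p`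
and `(e_p(W(0)))_p` are absolutely summable and their sums differ by at most `C·N^{−α}`. -/
theorem statement_13 (M L κ : ℝ) (hM : 0 < M) (hL : 0 < L) (hκ : 0 < κ)
    (hκM : κ * M ≤ π ^ 2) (W : E3 → ℝ)
    (hWb : ∀ k : E3, |W k| ≤ M) (hWL : ∀ k : E3, |W k - W 0| ≤ L * ‖k‖)
    (β : ℝ) (hβ0 : 0 < β) (hβ1 : β ≤ 1) (α : ℝ) (hα0 : 0 < α) (hαβ : α < β) :
    ∃ C > 0, ∀ N : ℕ, 1 ≤ N →
      Summable (fun n : NZ =>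
        bogE κ (latticePt n.1) (W (((N : ℝ) ^ β)⁻¹ • latticePt n.1))) ∧
      Summable (fun n : NZ => bogE κ (latticePt n.1) (W 0)) ∧
      |(∑' n : NZ, bogE κ (latticePt n.1) (W (((N : ℝ) ^ β)⁻¹ • latticePt n.1)))
          - ∑' n : NZ, bogE κ (latticePt n.1) (W 0)|
        ≤ C * (N : ℝ) ^ (-α) :=
  statement_13_general M L κ hM hL hκ hκM W hWb hWL β hβ0 α hα0 hαβ
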